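/- arXiv:1802.07891 — 8 statements merged into one kernel-verified Lean document; each statement's English description precedes it below -/
import Mathlib

section
/- Let p ≥ 2 and τ ≥ 1 be integers and let s ∈ 𝔽₂[x] be a polynomial of degree at most pτ − 1. Then (1 + x^τ) divides s in 𝔽₂[x] if and only if for every μ ∈ {0, 1, …, τ−1} the coefficient of x^{(p−1)τ+μ} in s equals the sum in 𝔽₂ of the coefficients of x^{ℓτ+μ} in s over ℓ = 0, 1, …, p−2. -/
open Polynomial

lemma sum_range_mul_aux {M : Type*} [AddCommMonoid M] (f : ℕ → M) (p τ : ℕ) :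
    ∑ n ∈ Finset.range (p * τ), f n
      = ∑ ℓ ∈ Finset.range p, ∑ μ ∈ Finset.range τ, f (ℓ * τ + μ) := by
  induction p with
  | zero => simp
  | succ p ih =>
    rw [Nat.succ_mul, Finset.sum_range_add, ih, Finset.sum_range_succ]

/-- For integers `p ≥ 2`, `τ ≥ 1` and a polynomial `s ∈ 𝔽₂[x]` of degree at most
`pτ - 1`, `(1 + x^τ)` divides `s` iff for every `μ < τ` the coefficient of `x^{(p-1)τ+μ}`
equals the sum of the coefficients of `x^{ℓτ+μ}` over `ℓ = 0, …, p-2`. -/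
theorem stmt_0 (p τ : ℕ) (hp : 2 ≤ p) (hτ : 1 ≤ τ)
    (s : Polynomial (ZMod 2)) (hdeg : s.natDegree ≤ p * τ - 1) :
    (1 + X ^ τ) ∣ s ↔
      ∀ μ < τ, s.coeff ((p - 1) * τ + μ) = ∑ ℓ ∈ Finset.range (p - 1), s.coeff (ℓ * τ + μ) := by
  have hd : (1 + X ^ τ : (ZMod 2)[X]) = X ^ τ - 1 := by
    rw [CharTwo.sub_eq_add, add_comm]
  set d : (ZMod 2)[X] := X ^ τ - 1 with hdef
  set r : (ZMod 2)[X] :=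
    ∑ μ ∈ Finset.range τ, C (∑ ℓ ∈ Finset.range p, s.coeff (ℓ * τ + μ)) * X ^ μ with hr
  have hpt : 1 ≤ p * τ := le_trans hτ (Nat.le_mul_of_pos_left τ (by omega))
  -- s as a double sum
  have hs : s = ∑ ℓ ∈ Finset.range p, ∑ μ ∈ Finset.range τ,
      C (s.coeff (ℓ * τ + μ)) * X ^ (ℓ * τ + μ) := by
    rw [← sum_range_mul_aux (fun n => C (s.coeff n) * X ^ n) p τ]
    conv_lhs => rw [s.as_sum_range' (p * τ) (by omega)]
    simp [Polynomial.C_mul_X_pow_eq_monomial]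
  -- d divides s - r
  have hdvd : d ∣ s - r := by
    have hr' : r = ∑ ℓ ∈ Finset.range p, ∑ μ ∈ Finset.range τ,
        C (s.coeff (ℓ * τ + μ)) * X ^ μ := by
      rw [hr, Finset.sum_comm]
      simp [Finset.sum_mul, map_sum]
    rw [hs, hr', ← Finset.sum_sub_distrib]
    refine Finset.dvd_sum fun ℓ _ => ?_
    rw [← Finset.sum_sub_distrib]
    refine Finset.dvd_sum fun μ _ => ?_
    have : C (s.coeff (ℓ * τ + μ)) * X ^ (ℓ * τ + μ) - C (s.coeff (ℓ * τ + μ)) * X ^ μ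
        = C (s.coeff (ℓ * τ + μ)) * X ^ μ * ((X ^ τ) ^ ℓ - 1) := by
      rw [← pow_mul, mul_comm τ ℓ]
      ring
    rw [this]
    exact Dvd.dvd.mul_left (by simpa using sub_dvd_pow_sub_pow (X ^ τ : (ZMod 2)[X]) 1 ℓ) _
  have hmon : d.Monic := by
    simpa using Polynomial.monic_X_pow_sub_C (1 : ZMod 2) (by omega : τ ≠ 0)
  have hd0 : d ≠ 0 := hmon.ne_zero
  have hdeg_d : d.natDegree = τ := by
    simpa using (Polynomial.natDegree_X_pow_sub_C (n := τ) (r := (1 : ZMod 2)))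
  have hdeg_r : r.natDegree < τ := by
    have : r.natDegree ≤ τ - 1 := by
      rw [hr]
      refine Polynomial.natDegree_sum_le_of_forall_le _ _ fun μ hμ => ?_
      refine le_trans (Polynomial.natDegree_C_mul_le _ _) ?_
      simp only [Polynomial.natDegree_X_pow]
      exact Nat.le_sub_one_of_lt (Finset.mem_range.mp hμ)
    omega
  -- coeff of r
  have hcoeff : ∀ μ < τ, r.coeff μ = ∑ ℓ ∈ Finset.range p, s.coeff (ℓ * τ + μ) := by
    intro μ hμ
    rw [hr, Polynomial.finset_sum_coeff]
    rw [Finset.sum_eq_single μ]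
    · rw [Polynomial.coeff_C_mul, Polynomial.coeff_X_pow]
      simp
    · intro b _ hb
      rw [Polynomial.coeff_C_mul, Polynomial.coeff_X_pow, if_neg (by omega), mul_zero]
    · intro h; exact absurd (Finset.mem_range.mpr hμ) h
  constructor
  · intro h μ hμ
    rw [hd] at h
    have hrdvd : d ∣ r := by simpa using dvd_sub h hdvd
    have hr0 : r = 0 := by
      by_contra h0
      exact absurd (hdeg_d ▸ Polynomial.natDegree_le_of_dvd hrdvd h0) (by omega)
    have := hcoeff μ hμ
    rw [hr0] at this
    simp only [Polynomial.coeff_zero] at this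
    have hsplit : ∑ ℓ ∈ Finset.range p, s.coeff (ℓ * τ + μ)
        = (∑ ℓ ∈ Finset.range (p - 1), s.coeff (ℓ * τ + μ)) + s.coeff ((p - 1) * τ + μ) := by
      conv_lhs => rw [show p = (p - 1) + 1 by omega]
      rw [Finset.sum_range_succ]
    rw [hsplit] at this
    rw [add_comm, ← CharTwo.sub_eq_add] at this
    exact sub_eq_zero.mp this.symm
  · intro h
    rw [hd]
    have hr0 : r = 0 := by
      apply Polynomial.ext
      intro n
      rcases lt_or_ge n τ with hn | hn
      · rw [hcoeff n hn]
        have hsplit : ∑ ℓ ∈ Finset.range p, s.coeff (ℓ * τ + n)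
            = (∑ ℓ ∈ Finset.range (p - 1), s.coeff (ℓ * τ + n)) + s.coeff ((p - 1) * τ + n) := by
          conv_lhs => rw [show p = (p - 1) + 1 by omega]
          rw [Finset.sum_range_succ]
        rw [hsplit, ← h n hn]
        simp [CharTwo.add_self_eq_zero]
      · rw [Polynomial.coeff_eq_zero_of_natDegree_lt (lt_of_lt_of_le hdeg_r hn)]
        simp
    have : s = s - r := by rw [hr0, sub_zero]
    rw [this]
    exact hdvd
end

section
/- Let p be an odd prime and τ ≥ 1 an integer, and let h(x) = 1 + x^τ + x^{2τ} + ⋯ + x^{(p−1)τ}. Since h(x) divides 1 + x^{pτ} in 𝔽₂[x], there is a canonical surjective ring homomorphism π : 𝔽₂[x]/(1+x^{pτ}) → 𝔽₂[x]/(h(x)) sending the residue of f modulo 1+x^{pτ} to its residue modulo h(x). The restriction of π to the ideal C_{pτ} is a bijection from C_{pτ} onto 𝔽₂[x]/(h(x)); that is, π is injective on C_{pτ} and every element of 𝔽₂[x]/(h(x)) is the image of a (unique) element of C_{pτ}. -/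
open Polynomial

/-- For an odd prime `p` and `τ ≥ 1`, with `h(x) = 1 + x^τ + ⋯ + x^{(p-1)τ}`,
the canonical surjective ring homomorphism
`π : 𝔽₂[x]/(1 + x^{pτ}) → 𝔽₂[x]/(h(x))` (sending the residue of `f` mod `1 + x^{pτ}` to its
residue mod `h`) restricts to a bijection from the ideal `C_{pτ}` (generated by the image of
`1 + x^τ`) onto `𝔽₂[x]/(h(x))`. -/
theorem stmt_2 (p τ : ℕ) (hp : p.Prime) (hodd : Odd p) (hτ : 1 ≤ τ) :
    ∃ π : (Polynomial (ZMod 2) ⧸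
            Ideal.span {(1 + X ^ (p * τ) : Polynomial (ZMod 2))}) →+*
          (Polynomial (ZMod 2) ⧸
            Ideal.span {(∑ i ∈ Finset.range p, X ^ (i * τ) : Polynomial (ZMod 2))}),
      (∀ f : Polynomial (ZMod 2),
        π (Ideal.Quotient.mk (Ideal.span {(1 + X ^ (p * τ) : Polynomial (ZMod 2))}) f) =
          Ideal.Quotient.mk
            (Ideal.span {(∑ i ∈ Finset.range p, X ^ (i * τ) : Polynomial (ZMod 2))}) f) ∧
      Set.BijOn π
        (↑(Ideal.span
            {Ideal.Quotient.mk (Ideal.span {(1 + X ^ (p * τ) : Polynomial (ZMod 2))})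
              (1 + X ^ τ)}) : Set _)
        Set.univ := by
  set u : Polynomial (ZMod 2) := 1 + X ^ τ with hu_def
  set h : Polynomial (ZMod 2) := ∑ i ∈ Finset.range p, X ^ (i * τ) with hh_def
  set g : Polynomial (ZMod 2) := 1 + X ^ (p * τ) with hg_def
  -- factorization g = u * h
  have hmul : u * h = g := by
    have h2 : ∀ a b : Polynomial (ZMod 2), a - b = a + b := fun a b => CharTwo.sub_eq_add a b
    have hgs := geom_sum_mul (X ^ τ : Polynomial (ZMod 2)) p
    simp only [← pow_mul, h2] at hgs
    calc u * h
        = (∑ i ∈ Finset.range p, X ^ (τ * i)) * (X ^ τ + 1) := by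
          rw [mul_comm]; congr 1
          · exact Finset.sum_congr rfl fun i _ => by rw [mul_comm]
          · rw [hu_def]; ring
      _ = X ^ (τ * p) + 1 := hgs
      _ = g := by rw [hg_def, mul_comm]; ring
  -- coprimality of h and u
  have hcop : IsCoprime h u := by
    have hp1 : (p : Polynomial (ZMod 2)) = 1 := by
      rw [Nat.odd_iff] at hodd
      have hz : (p : ZMod 2) = 1 := by
        rw [ZMod.natCast_eq_iff]
        exact ⟨p / 2, by simp [ZMod.val_one]; omega⟩
      rw [← Polynomial.C_eq_natCast, hz, map_one]
    have hdvd : u ∣ h - 1 := by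
      have hsum : (h - 1 : Polynomial (ZMod 2))
          = ∑ i ∈ Finset.range p, (X ^ (i * τ) - 1) := by
        rw [hh_def, Finset.sum_sub_distrib]
        simp [hp1]
      rw [hsum]
      refine Finset.dvd_sum fun i _ => ?_
      have h1 : u = X ^ τ - 1 := by rw [CharTwo.sub_eq_add, hu_def, add_comm]
      rw [h1]
      have := sub_dvd_pow_sub_pow (X ^ τ : Polynomial (ZMod 2)) 1 i
      simpa [← pow_mul, mul_comm] using this
    obtain ⟨c, hc⟩ := hdvd
    exact ⟨1, -c, by linear_combination hc⟩
  -- the homomorphism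
  have hle : Ideal.span {g} ≤ Ideal.span {h} := by
    rw [Ideal.span_singleton_le_span_singleton]
    exact ⟨u, by rw [← hmul]; ring⟩
  refine ⟨Ideal.Quotient.factor hle, fun f => Ideal.Quotient.factor_mk hle f, ?_, ?_, ?_⟩
  · exact fun x _ => Set.mem_univ _
  · -- injectivity on the ideal
    have key : ∀ z ∈ (Ideal.span {Ideal.Quotient.mk (Ideal.span {g}) u} :
        Ideal (Polynomial (ZMod 2) ⧸ Ideal.span {g})),
        Ideal.Quotient.factor hle z = 0 → z = 0 := by
      intro z hz hz0
      rw [Ideal.mem_span_singleton'] at hz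
      obtain ⟨a, ha⟩ := hz
      obtain ⟨v, rfl⟩ := Ideal.Quotient.mk_surjective a
      rw [← ha, ← map_mul, Ideal.Quotient.factor_mk, Ideal.Quotient.eq_zero_iff_mem,
        Ideal.mem_span_singleton] at hz0
      have hv : h ∣ v := hcop.dvd_of_dvd_mul_right hz0
      obtain ⟨w, rfl⟩ := hv
      rw [← ha, ← map_mul, Ideal.Quotient.eq_zero_iff_mem, Ideal.mem_span_singleton]
      exact ⟨w, by rw [← hmul]; ring⟩
    intro x hx y hy hxy
    have hsub : x - y ∈ (Ideal.span {Ideal.Quotient.mk (Ideal.span {g}) u} :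
        Ideal (Polynomial (ZMod 2) ⧸ Ideal.span {g})) := Ideal.sub_mem _ hx hy
    have := key _ hsub (by rw [map_sub, hxy, sub_self])
    exact sub_eq_zero.mp this
  · -- surjectivity
    intro y _
    obtain ⟨f, rfl⟩ := Ideal.Quotient.mk_surjective y
    obtain ⟨a, b, hab⟩ := hcop
    refine ⟨Ideal.Quotient.mk _ (b * f * u), ?_, ?_⟩
    · rw [SetLike.mem_coe, Ideal.mem_span_singleton']
      exact ⟨Ideal.Quotient.mk _ (b * f), by rw [← map_mul]⟩
    · rw [Ideal.Quotient.factor_mk, Ideal.Quotient.mk_eq_mk_iff_sub_mem,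
        Ideal.mem_span_singleton]
      exact ⟨-(a * f), by linear_combination f * hab⟩
end

section
/- Let p be an odd prime and τ ≥ 1 an integer, and let e(x) = x^τ + x^{2τ} + ⋯ + x^{(p−1)τ}. Then for every polynomial a ∈ 𝔽₂[x], e(x)·(1+x^τ)·a(x) ≡ (1+x^τ)·a(x) (mod 1+x^{pτ}); that is, the image of e(x) in R_{pτ} acts as a multiplicative identity on the ideal C_{pτ}. -/
open Polynomial

lemma key_geom (p τ : ℕ) (hp : 1 ≤ p) :
    ((∑ i ∈ Finset.Icc 1 (p - 1), X ^ (i * τ)) + 1) * (1 + X ^ τ)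
      = (1 + X ^ (p * τ) : Polynomial (ZMod 2)) := by
  have h1 : (∑ i ∈ Finset.Icc 1 (p - 1), (X : Polynomial (ZMod 2)) ^ (i * τ)) + 1
      = ∑ i ∈ Finset.range p, (X ^ τ) ^ i := by
    rw [Finset.range_eq_Ico, Finset.sum_eq_sum_Ico_succ_bot hp]
    have : Finset.Icc 1 (p - 1) = Finset.Ico 1 p := by
      rw [← Finset.Ico_add_one_right_eq_Icc]
      congr 1
      omega
    rw [this]
    simp [pow_mul, mul_comm, add_comm]
  have h2 := geom_sum_mul (X ^ τ : Polynomial (ZMod 2)) p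
  have hneg : (X ^ τ - 1 : Polynomial (ZMod 2)) = 1 + X ^ τ := by
    have : (-1 : Polynomial (ZMod 2)) = 1 := by
      apply CharTwo.neg_eq
    rw [sub_eq_add_neg, this, add_comm]
  rw [h1, ← hneg, h2, ← pow_mul, mul_comm τ p]
  have : ((X : Polynomial (ZMod 2)) ^ (p * τ) - 1) = 1 + X ^ (p * τ) := by
    have : (-1 : Polynomial (ZMod 2)) = 1 := CharTwo.neg_eq 1
    rw [sub_eq_add_neg, this, add_comm]
  exact this

/-- For an odd prime `p` and `τ ≥ 1`, with
`e(x) = x^τ + x^{2τ} + ⋯ + x^{(p-1)τ}`, for every `a ∈ 𝔽₂[x]` one has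
`e(x)·(1+x^τ)·a(x) ≡ (1+x^τ)·a(x) (mod 1+x^{pτ})`: the image of `e(x)` acts as a
multiplicative identity on the ideal `C_{pτ}`. -/
theorem stmt_3 (p τ : ℕ) (hp : p.Prime) (hodd : Odd p) (hτ : 1 ≤ τ)
    (a : Polynomial (ZMod 2)) :
    (1 + X ^ (p * τ) : Polynomial (ZMod 2)) ∣
      (∑ i ∈ Finset.Icc 1 (p - 1), X ^ (i * τ)) * ((1 + X ^ τ) * a) - (1 + X ^ τ) * a := by
  refine ⟨a, ?_⟩
  rw [← key_geom p τ hp.one_lt.le]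
  have hsub : ∀ x : Polynomial (ZMod 2), x - (1 + X ^ τ) * a = x + (1 + X ^ τ) * a := by
    intro x
    rw [sub_eq_add_neg, CharTwo.neg_eq]
  rw [hsub]
  ring
end

section
/- Let p be an odd prime, τ ≥ 1 an integer, and b an integer with 1 ≤ b < pτ, gcd(b, p) = 1, and a := gcd(b, τ). Then in 𝔽₂[x], (1 + x^b) · ( Σ_{j=0}^{(p−3)/2} Σ_{i=(2j+1)τ/a}^{(2j+2)τ/a − 1} x^{ib mod pτ} ) ≡ x^τ + x^{2τ} + ⋯ + x^{(p−1)τ} (mod 1 + x^{pτ}); that is, the displayed polynomial is the e(x)-inverse of 1 + x^b in R_{pτ}. -/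
open Polynomial

private lemma sum_range_two_mul' {M : Type*} [AddCommMonoid M] (m : ℕ) (g : ℕ → M) :
    ∑ i ∈ Finset.range (2 * m), g i
      = ∑ j ∈ Finset.range m, (g (2 * j) + g (2 * j + 1)) := by
  induction m with
  | zero => simp
  | succ m ih =>
      have h2 : 2 * (m + 1) = (2 * m + 1) + 1 := by ring
      rw [h2, Finset.sum_range_succ, Finset.sum_range_succ, Finset.sum_range_succ, ih]
      abel

/-- Let `p` be an odd prime, `τ ≥ 1`, and `b` with `1 ≤ b < pτ`,
`gcd(b,p) = 1`, `a := gcd(b,τ)`. Then in `𝔽₂[x]`,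
`(1+x^b) · (Σ_{j=0}^{(p-3)/2} Σ_{i=(2j+1)τ/a}^{(2j+2)τ/a - 1} x^{ib mod pτ})`
is congruent to `x^τ + x^{2τ} + ⋯ + x^{(p-1)τ}` modulo `1 + x^{pτ}`:
the displayed polynomial is the `e(x)`-inverse of `1 + x^b` in `R_{pτ}`. -/
theorem stmt_6 (p τ b : ℕ) (hp : p.Prime) (hodd : Odd p) (hτ : 1 ≤ τ)
    (hb1 : 1 ≤ b) (hb2 : b < p * τ) (hbp : Nat.gcd b p = 1) :
    (1 + X ^ (p * τ) : Polynomial (ZMod 2)) ∣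
      (1 + X ^ b) *
          (∑ j ∈ Finset.range ((p - 1) / 2),
            ∑ i ∈ Finset.Ico ((2 * j + 1) * τ / Nat.gcd b τ)
                ((2 * j + 2) * τ / Nat.gcd b τ),
              X ^ (i * b % (p * τ))) -
        ∑ i ∈ Finset.Icc 1 (p - 1), X ^ (i * τ) := by
  haveI : Fact p.Prime := ⟨hp⟩
  set n := p * τ with hn_def
  set a := Nat.gcd b τ with ha_def
  have ha_τ : a ∣ τ := Nat.gcd_dvd_right b τ
  have ha_b : a ∣ b := Nat.gcd_dvd_left b τ
  set c := τ / a with hc_def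
  set b' := b / a with hb'_def
  have hp1 : 1 < p := hp.one_lt
  have hcb : c * b = b' * τ := by
    conv_lhs => rw [← Nat.div_mul_cancel ha_b]
    conv_rhs => rw [← Nat.div_mul_cancel ha_τ]
    ring
  have hb'p : Nat.Coprime b' p := by
    have hdvd : b' ∣ b := ⟨a, (Nat.div_mul_cancel ha_b).symm⟩
    exact Nat.Coprime.coprime_dvd_left hdvd hbp
  -- move to the quotient ring
  set I : Ideal (Polynomial (ZMod 2)) := Ideal.span {(1 + X ^ n : Polynomial (ZMod 2))} with hI
  rw [← Ideal.mem_span_singleton (α := Polynomial (ZMod 2)), ← hI, ← Ideal.Quotient.eq]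
  simp only [map_mul, map_add, map_one, map_pow, map_sum]
  set y : Polynomial (ZMod 2) ⧸ I := Ideal.Quotient.mk I X with hy_def
  have h2 : (1 : Polynomial (ZMod 2) ⧸ I) + 1 = 0 := by
    have h0 : (1+1 : Polynomial (ZMod 2)) = 0 := by
      have := CharP.cast_eq_zero (Polynomial (ZMod 2)) 2
      norm_num at this ⊢
      exact_mod_cast this
    calc (1 : Polynomial (ZMod 2) ⧸ I) + 1
        = Ideal.Quotient.mk I (1 + 1) := by simp
      _ = 0 := by rw [h0]; simp
  have hyn : y ^ n = 1 := by
    have hmem : (1 + X ^ n : Polynomial (ZMod 2)) ∈ I := Ideal.subset_span rfl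
    have h0 : (1 : Polynomial (ZMod 2) ⧸ I) + y ^ n = 0 := by
      rw [hy_def, ← map_pow, ← map_one (Ideal.Quotient.mk I), ← map_add]
      exact (Ideal.Quotient.eq_zero_iff_mem).mpr hmem
    linear_combination h0 - h2
  have hmod : ∀ m : ℕ, y ^ (m % n) = y ^ m := by
    intro m
    conv_rhs => rw [← Nat.mod_add_div m n]
    rw [pow_add, pow_mul, hyn, one_pow, mul_one]
  have hsub : ∀ z w : Polynomial (ZMod 2) ⧸ I, w - z = z + w := by
    intro z w; linear_combination (-z) * h2
  simp only [hmod]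
  -- telescoping each inner sum
  have htel : ∀ s t : ℕ, s ≤ t →
      ∑ i ∈ Finset.Ico s t, ((fun i => y ^ (i * b)) (i + 1) - (fun i => y ^ (i * b)) i)
        = y ^ (t * b) - y ^ (s * b) := by
    intro s t h
    rw [Finset.sum_Ico_eq_sub _ h, Finset.sum_range_sub (fun i => y ^ (i * b)),
      Finset.sum_range_sub (fun i => y ^ (i * b))]
    abel
  have hinner : ∀ j : ℕ,
      (1 + y ^ b) * ∑ i ∈ Finset.Ico ((2 * j + 1) * τ / a) ((2 * j + 2) * τ / a), y ^ (i * b)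
        = y ^ ((2 * j + 1) * (b' * τ)) + y ^ ((2 * j + 2) * (b' * τ)) := by
    intro j
    have hst : (2 * j + 1) * τ / a ≤ (2 * j + 2) * τ / a :=
      Nat.div_le_div_right (Nat.mul_le_mul_right τ (by omega))
    rw [Finset.mul_sum]
    have hterm : ∀ i : ℕ, (1 + y ^ b) * y ^ (i * b)
        = (fun i => y ^ (i * b)) (i + 1) - (fun i => y ^ (i * b)) i := by
      intro i
      simp only []
      have e : (i + 1) * b = i * b + b := by ring
      rw [e, pow_add]
      linear_combination (y ^ (i * b)) * h2
    rw [Finset.sum_congr rfl fun i _ => hterm i, htel _ _ hst, hsub]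
    congr 2
    · rw [Nat.mul_div_assoc _ ha_τ, mul_assoc]
      norm_num [hcb]
      exact hcb
    · rw [Nat.mul_div_assoc _ ha_τ, mul_assoc]
      norm_num [hcb]
      exact hcb
  rw [Finset.mul_sum]
  rw [Finset.sum_congr rfl fun j _ => hinner j]
  -- combine the pairs into a single sum over Icc 1 (p-1)
  have hm : 2 * ((p - 1) / 2) = p - 1 :=
    Nat.mul_div_cancel' (Nat.Odd.sub_odd hodd odd_one).two_dvd
  have hpair :
      ∑ j ∈ Finset.range ((p - 1) / 2),
          (y ^ ((2 * j + 1) * (b' * τ)) + y ^ ((2 * j + 2) * (b' * τ)))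
        = ∑ k ∈ Finset.Icc 1 (p - 1), y ^ (k * (b' * τ)) := by
    rw [← Finset.Ico_add_one_right_eq_Icc, Finset.sum_Ico_eq_sum_range, Nat.add_sub_cancel]
    have key := sum_range_two_mul' ((p-1)/2) (fun i => y ^ ((1 + i) * (b' * τ)))
    rw [hm] at key
    rw [key]
    refine Finset.sum_congr rfl fun j _ => ?_
    have e1 : 1 + 2 * j = 2 * j + 1 := by ring
    have e2 : 1 + (2 * j + 1) = 2 * j + 2 := by ring
    rw [e1, e2]
  rw [hpair]
  -- reindex: k ↦ k*b' % p
  have hterm2 : ∀ k : ℕ, y ^ (k * (b' * τ)) = y ^ ((k * b' % p) * τ) := by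
    intro k
    rw [← hmod (k * (b' * τ))]
    congr 1
    rw [← mul_assoc, hn_def, Nat.mul_mod_mul_right]
  rw [Finset.sum_congr rfl fun k _ => hterm2 k]
  -- bijection on Icc 1 (p-1)
  set d := ((b' : ZMod p)⁻¹).val with hd_def
  have hb'ne : (b' : ZMod p) ≠ 0 := by
    rw [Ne, ZMod.natCast_eq_zero_iff]
    intro hdvd
    have h1 : p ∣ Nat.gcd b' p := Nat.dvd_gcd hdvd dvd_rfl
    rw [hb'p] at h1
    have := Nat.eq_one_of_dvd_one h1
    omega
  have hbd : b' * d ≡ 1 [MOD p] := by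
    rw [← ZMod.natCast_eq_natCast_iff]
    push_cast
    rw [hd_def, ZMod.natCast_val, ZMod.cast_id, mul_inv_cancel₀ hb'ne]
  have hmem : ∀ u k : ℕ, Nat.Coprime u p → k ∈ Finset.Icc 1 (p - 1) →
      k * u % p ∈ Finset.Icc 1 (p - 1) := by
    intro u k hu hk
    rw [Finset.mem_Icc] at hk ⊢
    have hlt : k * u % p < p := Nat.mod_lt _ (by omega)
    have hne : k * u % p ≠ 0 := by
      intro h0
      have hd1 : p ∣ k * u := Nat.dvd_of_mod_eq_zero h0
      have hd2 : p ∣ k := Nat.Coprime.dvd_of_dvd_mul_right (hu.symm) hd1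
      have := Nat.le_of_dvd (by omega) hd2
      omega
    omega
  have hdp : Nat.Coprime d p := by
    have h1p : 1 % p = 1 := Nat.mod_eq_of_lt hp1
    have hmod1 : b' * d % p = 1 := by
      have h := hbd
      unfold Nat.ModEq at h
      omega
    have hq : p * (b' * d / p) + 1 = b' * d := by
      conv_rhs => rw [← Nat.div_add_mod (b' * d) p]
      rw [hmod1]
    have h1 : Nat.gcd d p ∣ b' * d := (Nat.gcd_dvd_left d p).mul_left b'
    have h3 : Nat.gcd d p ∣ p * (b' * d / p) := (Nat.gcd_dvd_right d p).mul_right _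
    have h4 : Nat.gcd d p ∣ b' * d - p * (b' * d / p) := Nat.dvd_sub h1 h3
    have h5 : b' * d - p * (b' * d / p) = 1 := by omega
    rw [h5] at h4
    exact Nat.eq_one_of_dvd_one h4
  refine Finset.sum_nbij' (fun k => k * b' % p) (fun k => k * d % p)
    (fun k hk => hmem b' k hb'p hk) (fun k hk => hmem d k hdp hk) ?_ ?_ ?_
  · intro k hk
    rw [Finset.mem_Icc] at hk
    calc k * b' % p * d % p = k * b' * d % p := Nat.mod_mul_mod _ _ _
      _ = k % p := by
          have : k * b' * d ≡ k * 1 [MOD p] := by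
            rw [mul_assoc]; exact Nat.ModEq.mul_left k hbd
          rw [mul_one] at this
          exact this
      _ = k := Nat.mod_eq_of_lt (by omega)
  · intro k hk
    rw [Finset.mem_Icc] at hk
    calc k * d % p * b' % p = k * d * b' % p := Nat.mod_mul_mod _ _ _
      _ = k % p := by
          have : k * (d * b') ≡ k * 1 [MOD p] := Nat.ModEq.mul_left k (by rwa [mul_comm] at hbd)
          rw [mul_one, ← mul_assoc] at this
          exact this
      _ = k := Nat.mod_eq_of_lt (by omega)
  · intro k _
    rfl
end

section
/- Let p be an odd prime, τ ≥ 1 an integer, and b an integer with 1 ≤ b < pτ, gcd(b, p) = 1 and a := gcd(b, τ). Then in 𝔽₂[x], Σ_{i=1}^{p−1} x^{(i·τ·(b/a)) mod pτ} ≡ x^τ + x^{2τ} + ⋯ + x^{(p−1)τ} (mod 1 + x^{pτ}). -/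
open Polynomial

/-- Let `p` be an odd prime, `τ ≥ 1`, and `b` with `1 ≤ b < pτ`,
`gcd(b,p) = 1`, `a := gcd(b,τ)`. Then in `𝔽₂[x]`,
`Σ_{i=1}^{p-1} x^{(i·τ·(b/a)) mod pτ} ≡ x^τ + x^{2τ} + ⋯ + x^{(p-1)τ} (mod 1 + x^{pτ})`. -/
theorem stmt_8 (p τ b : ℕ) (hp : p.Prime) (hodd : Odd p) (hτ : 1 ≤ τ)
    (hb1 : 1 ≤ b) (hb2 : b < p * τ) (hbp : Nat.gcd b p = 1) :
    (1 + X ^ (p * τ) : Polynomial (ZMod 2)) ∣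
      (∑ i ∈ Finset.Icc 1 (p - 1), X ^ (i * τ * (b / Nat.gcd b τ) % (p * τ))) -
        ∑ i ∈ Finset.Icc 1 (p - 1), X ^ (i * τ) := by
  set b' := b / Nat.gcd b τ with hb'
  have hp1 : 1 < p := hp.one_lt
  have hb'p : Nat.Coprime b' p :=
    Nat.Coprime.coprime_dvd_left (Nat.div_dvd_of_dvd (Nat.gcd_dvd_left b τ)) hbp
  have hnd : ¬ p ∣ b' := fun h => by
    have := Nat.eq_one_of_dvd_coprimes hb'p.symm (dvd_refl p) h
    omega
  have hexp : ∀ i : ℕ, i * τ * b' % (p * τ) = τ * ((i * b') % p) := by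
    intro i
    have h1 : i * τ * b' = τ * (i * b') := by ring
    rw [h1, Nat.mul_comm p τ, Nat.mul_mod_mul_left]
  have hsum : (∑ i ∈ Finset.Icc 1 (p - 1), (X : Polynomial (ZMod 2)) ^ (i * τ * b' % (p * τ)))
      = ∑ i ∈ Finset.Icc 1 (p - 1), X ^ (i * τ) := by
    simp only [hexp]
    obtain ⟨c, -, hc⟩ := Nat.exists_mul_mod_eq_one_of_coprime hb'p hp1
    have hndc : ¬ p ∣ c := fun h => by
      obtain ⟨k, hk⟩ := h
      rw [hk] at hc
      have : b' * (p * k) % p = 0 := by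
        rw [show b' * (p * k) = p * (b' * k) by ring, Nat.mul_mod_right]
      omega
    have key : ∀ u v : ℕ, ¬ p ∣ u → 1 ≤ v → v ≤ p - 1 → v * u % p ∈ Finset.Icc 1 (p - 1) := by
      intro u v hu hv1 hv2
      have hvnd : ¬ p ∣ v := Nat.not_dvd_of_pos_of_lt (by omega) (by omega)
      have : ¬ p ∣ v * u := fun h => ((Nat.Prime.dvd_mul hp).mp h).elim hvnd hu
      have hne : v * u % p ≠ 0 := fun h => this (Nat.dvd_of_mod_eq_zero h)
      have hlt : v * u % p < p := Nat.mod_lt _ (by omega)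
      simp only [Finset.mem_Icc]; omega
    have cancel : ∀ u v w : ℕ, u * v % p = 1 → w < p → w * u % p * v % p = w := by
      intro u v w huv hw
      rw [Nat.mod_mul_mod, mul_assoc, Nat.mul_mod, huv, mul_one,
        Nat.mod_mod_of_dvd _ dvd_rfl, Nat.mod_eq_of_lt hw]
    refine Finset.sum_nbij' (fun i => i * b' % p) (fun j => j * c % p) ?_ ?_ ?_ ?_ ?_
    · intro i hi
      simp only [Finset.mem_Icc] at hi
      exact key b' i hnd hi.1 hi.2
    · intro j hj
      simp only [Finset.mem_Icc] at hj
      exact key c j hndc hj.1 hj.2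
    · intro i hi
      simp only [Finset.mem_Icc] at hi
      exact cancel b' c i hc (by omega)
    · intro j hj
      simp only [Finset.mem_Icc] at hj
      have hc' : c * b' % p = 1 := by rw [Nat.mul_comm]; exact hc
      exact cancel c b' j hc' (by omega)
    · intro i hi
      rw [Nat.mul_comm (i * b' % p) τ]
  rw [hsum, sub_self]
  exact dvd_zero _
end

section
/- Let p be a prime such that 2 is a primitive root modulo p (i.e., the multiplicative order of 2 in (ℤ/pℤ)ˣ is p − 1), let τ = 2^m be a power of 2, and let h(x) = 1 + x^τ + x^{2τ} + ⋯ + x^{(p−1)τ} ∈ 𝔽₂[x]. If a polynomial D ∈ 𝔽₂[x] is not divisible by 1 + x + x² + ⋯ + x^{p−1}, then the residue of D in 𝔽₂[x]/(h(x)) is a unit. -/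
open Polynomial

/-- The polynomial `1 + x + ⋯ + x^{p-1}` is irreducible over `𝔽₂` when 2 is a primitive root
modulo the prime `p`. -/
lemma geomSum_irreducible (p : ℕ) (hp : p.Prime)
    (hprim : orderOf (2 : ZMod p) = p - 1) :
    Irreducible (∑ i ∈ Finset.range p, X ^ i : Polynomial (ZMod 2)) := by
  haveI : Fact p.Prime := ⟨hp⟩
  set g : Polynomial (ZMod 2) := ∑ i ∈ Finset.range p, X ^ i with hg
  have hp2 : p ≠ 2 := by
    rintro rfl
    rw [show (2 : ℕ) - 1 = 1 from rfl, orderOf_eq_one_iff] at hprim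
    exact absurd hprim (by decide)
  have hodd : Odd p := hp.odd_of_ne_two hp2
  have hcyc : g = cyclotomic p (ZMod 2) := (cyclotomic_prime (ZMod 2) p).symm
  have hgmonic : g.Monic := hcyc ▸ cyclotomic.monic p (ZMod 2)
  have hgdeg : g.natDegree = p - 1 := by
    rw [hcyc, natDegree_cyclotomic, Nat.totient_prime hp]
  have hgne : g ≠ 0 := hgmonic.ne_zero
  have hdegpos : 0 < g.natDegree := by
    rw [hgdeg]; have := hp.two_le; omega
  obtain ⟨q, hqm, hqi, hqd⟩ :=
    g.exists_monic_irreducible_factor (not_isUnit_of_natDegree_pos g hdegpos)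
  haveI : Fact (Irreducible q) := ⟨hqi⟩
  set K := AdjoinRoot q
  set α : K := AdjoinRoot.root q with hα
  have hqne : q ≠ 0 := hqi.ne_zero
  -- α is a root of g
  have hgα : (aeval α) g = 0 := by
    rw [AdjoinRoot.aeval_eq, AdjoinRoot.mk_eq_zero]
    exact hqd
  have hsum : (∑ i ∈ Finset.range p, α ^ i) = 0 := by
    have := hgα
    rw [hg, map_sum] at this
    simpa using this
  -- α^p = 1
  have hαp : α ^ p = 1 := by
    have := geom_sum_mul α p
    rw [hsum, zero_mul] at this
    have h1 : α ^ p - 1 = 0 := this.symm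
    linear_combination h1
  have charK : CharP K 2 := charP_of_injective_algebraMap
    (algebraMap (ZMod 2) K).injective 2
  -- α ≠ 1
  have hα1 : α ≠ 1 := by
    intro h
    rw [h] at hsum
    simp only [one_pow, Finset.sum_const, Finset.card_range, nsmul_eq_mul, mul_one] at hsum
    have h2 := (CharP.cast_eq_zero_iff K 2 p).mp hsum
    rw [Nat.odd_iff] at hodd
    omega
  have horder : orderOf α = p := orderOf_eq_prime hαp hα1
  -- K is a finite field of cardinality 2 ^ (natDegree q)
  haveI : Module.Finite (ZMod 2) K := (AdjoinRoot.powerBasis hqne).finite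
  haveI : Finite K := Module.finite_of_finite (ZMod 2)
  haveI : Fintype K := Fintype.ofFinite K
  have hcard : Fintype.card K = 2 ^ q.natDegree := by
    rw [Module.card_eq_pow_finrank (K := ZMod 2) (V := K), ZMod.card,
      (AdjoinRoot.powerBasis hqne).finrank, AdjoinRoot.powerBasis_dim]
  have hα0 : α ≠ 0 := by
    intro h
    rw [h, zero_pow hp.ne_zero] at hαp
    exact zero_ne_one hαp
  have hpow : α ^ (2 ^ q.natDegree - 1) = 1 := by
    rw [← hcard]
    exact FiniteField.pow_card_sub_one_eq_one α hα0
  have hdvd : p ∣ 2 ^ q.natDegree - 1 := horder ▸ orderOf_dvd_of_pow_eq_one hpow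
  -- hence (2 : ZMod p) ^ natDegree q = 1
  have h2d : (2 : ZMod p) ^ q.natDegree = 1 := by
    have h1le : 1 ≤ 2 ^ q.natDegree := Nat.one_le_two_pow
    have : ((2 ^ q.natDegree - 1 : ℕ) : ZMod p) = 0 :=
      (ZMod.natCast_eq_zero_iff _ _).mpr hdvd
    have h2 : ((2 ^ q.natDegree : ℕ) : ZMod p) = 1 := by
      have := congrArg (· + (1 : ZMod p)) this
      simpa [Nat.sub_add_cancel h1le] using
        (by push_cast [Nat.cast_sub h1le] at this ⊢; linear_combination this)
    push_cast at h2
    exact h2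
  have hdvd2 : p - 1 ∣ q.natDegree := hprim ▸ orderOf_dvd_of_pow_eq_one h2d
  have hdlt : q.natDegree ≤ p - 1 := hgdeg ▸ natDegree_le_of_dvd hqd hgne
  have hdpos : 0 < q.natDegree := hqi.natDegree_pos
  have hdeq : q.natDegree = p - 1 := Nat.le_antisymm hdlt (Nat.le_of_dvd hdpos hdvd2)
  -- q and g are associated
  obtain ⟨c, hc⟩ := hqd
  have hcne : c ≠ 0 := by
    rintro rfl; rw [mul_zero] at hc; exact hgne hc
  have hcdeg : c.natDegree = 0 := by
    have := natDegree_mul hqne hcne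
    rw [← hc, hgdeg, hdeq] at this
    omega
  have hcunit : IsUnit c := by
    rw [Polynomial.eq_C_of_natDegree_eq_zero hcdeg]
    exact isUnit_C.mpr (isUnit_iff_ne_zero.mpr (fun h => hcne (by
      rw [Polynomial.eq_C_of_natDegree_eq_zero hcdeg, h, map_zero])))
  have hassoc : Associated q g := ⟨hcunit.unit, by rw [IsUnit.unit_spec]; exact hc.symm⟩
  exact hassoc.irreducible hqi

/-- Let `p` be a prime such that 2 is a primitive root modulo `p`, let
`τ = 2^m`, and `h(x) = 1 + x^τ + ⋯ + x^{(p-1)τ} ∈ 𝔽₂[x]`. If `D ∈ 𝔽₂[x]` is not divisible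
by `1 + x + x² + ⋯ + x^{p-1}`, then the residue of `D` in `𝔽₂[x]/(h(x))` is a unit. -/
theorem stmt_12 (p m : ℕ) (hp : p.Prime)
    (hprim : orderOf (2 : ZMod p) = p - 1)
    (D : Polynomial (ZMod 2))
    (hD : ¬ ((∑ i ∈ Finset.range p, X ^ i : Polynomial (ZMod 2)) ∣ D)) :
    IsUnit (Ideal.Quotient.mk
      (Ideal.span {(∑ i ∈ Finset.range p, X ^ (i * 2 ^ m) : Polynomial (ZMod 2))}) D) := by
  set g : Polynomial (ZMod 2) := ∑ i ∈ Finset.range p, X ^ i with hg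
  have hirr : Irreducible g := geomSum_irreducible p hp hprim
  -- the modulus is g ^ (2 ^ m) by the Frobenius identity
  have hh : (∑ i ∈ Finset.range p, X ^ (i * 2 ^ m) : Polynomial (ZMod 2)) = g ^ (2 ^ m) := by
    rw [hg, sum_pow_char_pow]
    exact Finset.sum_congr rfl fun i _ => by rw [← pow_mul]
  -- D is coprime to g ^ (2 ^ m)
  have hcop : IsCoprime D ((∑ i ∈ Finset.range p, X ^ (i * 2 ^ m) : Polynomial (ZMod 2))) := by
    rw [hh]
    exact hirr.coprime_pow_of_not_dvd _ hD
  obtain ⟨a, b, hab⟩ := hcop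
  set I := Ideal.span {(∑ i ∈ Finset.range p, X ^ (i * 2 ^ m) : Polynomial (ZMod 2))}
  refine IsUnit.of_mul_eq_one (Ideal.Quotient.mk I a) ?_
  have hmem : (∑ i ∈ Finset.range p, X ^ (i * 2 ^ m) : Polynomial (ZMod 2)) ∈ I :=
    Ideal.subset_span rfl
  have h0 : Ideal.Quotient.mk I (∑ i ∈ Finset.range p, X ^ (i * 2 ^ m)) = 0 :=
    (Ideal.Quotient.eq_zero_iff_mem).mpr hmem
  have := congrArg (Ideal.Quotient.mk I) hab
  rw [map_add, map_mul, map_mul, h0, mul_zero, add_zero, map_one] at this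
  rw [mul_comm]
  exact this
end

section
/- Let r ≥ 3 be an odd integer, k ≥ r, d = k + (r−1)/2, and η = d − k + 1 = (r+1)/2. For every ℓ ∈ {1, …, r} and every ℓ×ℓ submatrix M of the k×r matrix P, the determinant of M, computed in 𝔽₂[x], has degree at most B = 2·Σ_{m=0}^{(r−3)/2} (d−k−m)·η^{k−2−m}. -/
open Polynomial


lemma two_term_rearrange (c1 c2 B1 B2 : ℕ) (hc : c2 ≤ c1) (hB : B1 ≤ B2) :
    c1 * B1 + c2 * B2 ≤ c1 * B2 + c2 * B1 := by nlinarith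

lemma key_lemma (b : ℕ) (hb1 : 1 ≤ b) :
    ∀ D K : ℕ, ∀ S : Finset (ℕ × ℕ),
      (∀ a ∈ S, a.1 ≤ D) → (∀ a ∈ S, a.2 ≤ K) →
      Set.InjOn Prod.fst (S : Set (ℕ × ℕ)) → Set.InjOn Prod.snd (S : Set (ℕ × ℕ)) →
      ∑ a ∈ S, a.1 * b ^ a.2 ≤ ∑ m ∈ Finset.range D, (D - m) * b ^ (K - m) := by
  intro D
  induction D with
  | zero =>
    intro K S h1 _ _ _
    rw [Finset.sum_eq_zero]
    · simp
    · intro a ha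
      have := h1 a ha
      have : a.1 = 0 := by omega
      simp [this]
  | succ D ih =>
    intro K S h1 h2 hf hs
    rcases S.eq_empty_or_nonempty with rfl | hne
    · simp
    obtain ⟨A, hA, hAmax⟩ := S.exists_max_image Prod.fst hne
    obtain ⟨A', hA', hA'max⟩ := S.exists_max_image Prod.snd hne
    have hAD := h1 A hA
    have hA'K := h2 A' hA'
    have hpow : ∀ p : ℕ, p ≤ K → b ^ p ≤ b ^ K := fun p hp => Nat.pow_le_pow_right hb1 hp
    -- reindex RHS
    have hRHS : ∑ m ∈ Finset.range (D+1), (D + 1 - m) * b ^ (K - m)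
        = (D+1) * b ^ K + ∑ m ∈ Finset.range D, (D - m) * b ^ (K - 1 - m) := by
      rw [Finset.sum_range_succ']
      simp only [Nat.sub_zero]
      rw [add_comm]
      congr 1
      apply Finset.sum_congr rfl
      intro m _
      congr 1
      · omega
      · congr 1; omega
    rw [hRHS]
    by_cases hAA : A = A'
    · -- A has both max fst and max snd
      rw [← Finset.add_sum_erase _ _ hA]
      apply add_le_add
      · exact Nat.mul_le_mul (h1 A hA) (hpow _ (h2 A hA))
      · apply ih (K-1)
        · intro a ha
          rw [Finset.mem_erase] at ha
          have h3 := hAmax a ha.2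
          have h5 : a.1 ≠ A.1 := fun h => ha.1 (hf ha.2 hA h)
          omega
        · intro a ha
          rw [Finset.mem_erase] at ha
          have h3 := hA'max a ha.2
          have h5 : a.2 ≠ A.2 := fun h => ha.1 (hs ha.2 hA (by rw [h, hAA]))
          rw [hAA] at h5
          omega
        · exact hf.mono (by simp [Finset.erase_subset])
        · exact hs.mono (by simp [Finset.erase_subset])
    · -- swap case
      have hA'mem : A' ∈ S.erase A := Finset.mem_erase.mpr ⟨fun h => hAA h.symm, hA'⟩
      have hfst : A'.1 < A.1 := by
        have := hAmax A' hA'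
        have : A'.1 ≠ A.1 := fun h => hAA (hf hA' hA h).symm
        omega
      have hsnd : A.2 < A'.2 := by
        have := hA'max A hA
        have : A.2 ≠ A'.2 := fun h => hAA (hs hA hA' h)
        omega
      set T : Finset (ℕ × ℕ) := (S.erase A).erase A' with hT
      have hTsub : ∀ z ∈ T, z ∈ S ∧ z ≠ A ∧ z ≠ A' := by
        intro z hz
        rw [hT, Finset.mem_erase, Finset.mem_erase] at hz
        exact ⟨hz.2.2, hz.2.1, hz.1⟩
      have hnewmem : (A'.1, A.2) ∉ T := by
        intro hmem
        obtain ⟨hzS, _, hzA'⟩ := hTsub _ hmem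
        exact hzA' (Prod.ext (rfl) (by
          have : (A'.1, A.2) = A' := hf hzS hA' rfl
          exact absurd (congrArg Prod.snd this) (by simp; omega)))
      -- sum decomposition
      have hsum : ∑ a ∈ S, a.1 * b ^ a.2
          = A.1 * b ^ A.2 + A'.1 * b ^ A'.2 + ∑ a ∈ T, a.1 * b ^ a.2 := by
        rw [← Finset.add_sum_erase _ _ hA, ← Finset.add_sum_erase _ _ hA'mem, hT]
        ring
      rw [hsum]
      have hre : A.1 * b ^ A.2 + A'.1 * b ^ A'.2 ≤ A.1 * b ^ A'.2 + A'.1 * b ^ A.2 :=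
        two_term_rearrange _ _ _ _ (le_of_lt hfst) (Nat.pow_le_pow_right hb1 (le_of_lt hsnd))
      calc A.1 * b ^ A.2 + A'.1 * b ^ A'.2 + ∑ a ∈ T, a.1 * b ^ a.2
          ≤ A.1 * b ^ A'.2 + (A'.1 * b ^ A.2 + ∑ a ∈ T, a.1 * b ^ a.2) := by omega
        _ ≤ (D+1) * b ^ K + ∑ m ∈ Finset.range D, (D - m) * b ^ (K - 1 - m) := by
            apply add_le_add
            · exact Nat.mul_le_mul (h1 A hA) (hpow _ (h2 A' hA'))
            · have hins : ∑ a ∈ insert (A'.1, A.2) T, a.1 * b ^ a.2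
                  = A'.1 * b ^ A.2 + ∑ a ∈ T, a.1 * b ^ a.2 := Finset.sum_insert hnewmem
              rw [← hins]
              apply ih (K-1)
              · intro a ha
                rw [Finset.mem_insert] at ha
                rcases ha with rfl | ha
                · simp; have := h1 A hA; omega
                · obtain ⟨hzS, hzA, _⟩ := hTsub _ ha
                  have h6 := hAmax a hzS
                  have h7 : a.1 ≠ A.1 := fun h => hzA (hf hzS hA h)
                  omega
              · intro a ha
                rw [Finset.mem_insert] at ha
                rcases ha with rfl | ha
                · simp; have := h2 A' hA'; omega
                · obtain ⟨hzS, _, hzA'⟩ := hTsub _ ha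
                  have h6 := hA'max a hzS
                  have h7 : a.2 ≠ A'.2 := fun h => hzA' (hs hzS hA' h)
                  omega
              · intro x hx y hy hxy
                simp only [Finset.coe_insert, Set.mem_insert_iff] at hx hy
                rcases hx with rfl | hx <;> rcases hy with rfl | hy
                · rfl
                · obtain ⟨hzS, _, hzA'⟩ := hTsub _ hy
                  exact absurd (hf hzS hA' hxy.symm) hzA'
                · obtain ⟨hzS, _, hzA'⟩ := hTsub _ hx
                  exact absurd (hf hzS hA' hxy) hzA'
                · obtain ⟨hxS, _, _⟩ := hTsub _ hx
                  obtain ⟨hyS, _, _⟩ := hTsub _ hy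
                  exact hf hxS hyS hxy
              · intro x hx y hy hxy
                simp only [Finset.coe_insert, Set.mem_insert_iff] at hx hy
                rcases hx with rfl | hx <;> rcases hy with rfl | hy
                · rfl
                · obtain ⟨hzS, hzA, _⟩ := hTsub _ hy
                  exact absurd (hs hzS hA hxy.symm) hzA
                · obtain ⟨hzS, hzA, _⟩ := hTsub _ hx
                  exact absurd (hs hzS hA hxy) hzA
                · obtain ⟨hxS, _, _⟩ := hTsub _ hx
                  obtain ⟨hyS, _, _⟩ := hTsub _ hy
                  exact hs hxS hyS hxy

/-- exponent function -/
def expE (k η : ℕ) (i j : ℕ) : ℕ :=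
  if j < η then (if i < k - 1 then j * η ^ i else 0)
  else (if i = 0 then 0 else (2 * η - 1 - j) * η ^ (k - 1 - i))

/-- The `k × r` encoding matrix `P` of the first construction `𝒞₁(k,r,d,p)`
(with `η = d-k+1`, `r = 2η-1`), written 0-indexed: for columns `j < η`,
`P(i,j) = x^{j·η^i}` for rows `i < k-1` and `P(k-1,j) = 1`; for columns `j ≥ η`,
`P(0,j) = 1` and `P(i,j) = x^{(2η-1-j)·η^{k-1-i}}` for rows `1 ≤ i ≤ k-1`. -/
noncomputable def encodingMatrixP (k r η : ℕ) :
    Matrix (Fin k) (Fin r) (Polynomial (ZMod 2)) :=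
  Matrix.of fun i j =>
    if (j : ℕ) < η then
      if (i : ℕ) < k - 1 then X ^ ((j : ℕ) * η ^ (i : ℕ)) else 1
    else
      if (i : ℕ) = 0 then 1 else X ^ ((2 * η - 1 - (j : ℕ)) * η ^ (k - 1 - (i : ℕ)))


lemma encodingMatrixP_eq (k r η : ℕ) (i : Fin k) (j : Fin r) :
    encodingMatrixP k r η i j = X ^ (expE k η (i : ℕ) (j : ℕ)) := by
  unfold encodingMatrixP expE
  simp only [Matrix.of_apply]
  split_ifs <;> simp

lemma expE_natDegree (k η : ℕ) (i j : ℕ) :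
    (X ^ (expE k η i j) : Polynomial (ZMod 2)).natDegree = expE k η i j :=
  natDegree_X_pow _

lemma main_bound (k η ℓ : ℕ) (hη : 2 ≤ η) (hk : 2 * η - 1 ≤ k)
    (ri ci : Fin ℓ → ℕ) (hri : Function.Injective ri) (hci : Function.Injective ci)
    (hrik : ∀ i, ri i < k) (hcir : ∀ i, ci i < 2 * η - 1) :
    ∑ i : Fin ℓ, expE k η (ri i) (ci i)
      ≤ 2 * ∑ m ∈ Finset.range (η - 1), (η - 1 - m) * η ^ (k - 2 - m) := by
  have hb1 : 1 ≤ η := by omega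
  have hsplit : ∀ i : Fin ℓ, expE k η (ri i) (ci i)
      = (if ci i < η ∧ ri i < k - 1 then (ci i) * η ^ (ri i) else 0)
      + (if ¬ (ci i < η) ∧ ri i ≠ 0 then (2 * η - 1 - ci i) * η ^ (k - 1 - ri i) else 0) := by
    intro i
    unfold expE
    by_cases h1 : ci i < η <;> by_cases h2 : ri i < k - 1 <;> by_cases h3 : ri i = 0 <;>
      simp [h1, h2, h3]
  rw [Finset.sum_congr rfl (fun i _ => hsplit i), Finset.sum_add_distrib]
  have hL : ∑ i : Fin ℓ, (if ci i < η ∧ ri i < k - 1 then (ci i) * η ^ (ri i) else 0)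
      ≤ ∑ m ∈ Finset.range (η - 1), (η - 1 - m) * η ^ (k - 2 - m) := by
    rw [← Finset.sum_filter]
    set F := Finset.univ.filter (fun i : Fin ℓ => ci i < η ∧ ri i < k - 1) with hF
    have hinj : Set.InjOn (fun i : Fin ℓ => ((ci i, ri i) : ℕ × ℕ)) F := by
      intro x _ y _ hxy
      exact hci (congrArg Prod.fst hxy)
    have himg : ∑ i ∈ F, (ci i) * η ^ (ri i)
        = ∑ a ∈ F.image (fun i => ((ci i, ri i) : ℕ × ℕ)), a.1 * η ^ a.2 :=
      (Finset.sum_image (f := fun a : ℕ × ℕ => a.1 * η ^ a.2) (fun x hx y hy h => hinj hx hy h)).symm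
    rw [himg]
    have hcong : ∑ m ∈ Finset.range (η - 1), (η - 1 - m) * η ^ (k - 2 - m)
        = ∑ m ∈ Finset.range (η - 1), (η - 1 - m) * η ^ ((k - 2) - m) := rfl
    rw [hcong]
    apply key_lemma η hb1 (η - 1) (k - 2)
    · intro a ha
      obtain ⟨i, hi, rfl⟩ := Finset.mem_image.mp ha
      rw [hF, Finset.mem_filter] at hi
      simp only
      omega
    · intro a ha
      obtain ⟨i, hi, rfl⟩ := Finset.mem_image.mp ha
      rw [hF, Finset.mem_filter] at hi
      simp only
      omega
    · intro x hx y hy hxy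
      simp only [Finset.coe_image, Set.mem_image] at hx hy
      obtain ⟨i, hi, rfl⟩ := hx
      obtain ⟨j, hj, rfl⟩ := hy
      simp only at hxy
      rw [hci hxy]
    · intro x hx y hy hxy
      simp only [Finset.coe_image, Set.mem_image] at hx hy
      obtain ⟨i, hi, rfl⟩ := hx
      obtain ⟨j, hj, rfl⟩ := hy
      simp only at hxy
      rw [hri hxy]
  have hR : ∑ i : Fin ℓ, (if ¬ (ci i < η) ∧ ri i ≠ 0 then (2 * η - 1 - ci i) * η ^ (k - 1 - ri i) else 0)
      ≤ ∑ m ∈ Finset.range (η - 1), (η - 1 - m) * η ^ (k - 2 - m) := by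
    rw [← Finset.sum_filter]
    set F := Finset.univ.filter (fun i : Fin ℓ => ¬ (ci i < η) ∧ ri i ≠ 0) with hF
    have hcinj : ∀ x ∈ F, ∀ y ∈ F, 2 * η - 1 - ci x = 2 * η - 1 - ci y → x = y := by
      intro x _ y _ h
      have hx := hcir x
      have hy := hcir y
      exact hci (by omega)
    have hrinj : ∀ x ∈ F, ∀ y ∈ F, k - 1 - ri x = k - 1 - ri y → x = y := by
      intro x _ y _ h
      have hx := hrik x
      have hy := hrik y
      exact hri (by omega)
    have himg : ∑ i ∈ F, (2 * η - 1 - ci i) * η ^ (k - 1 - ri i)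
        = ∑ a ∈ F.image (fun i => ((2 * η - 1 - ci i, k - 1 - ri i) : ℕ × ℕ)), a.1 * η ^ a.2 :=
      (Finset.sum_image (f := fun a : ℕ × ℕ => a.1 * η ^ a.2) (g := fun i => ((2 * η - 1 - ci i, k - 1 - ri i) : ℕ × ℕ)) (fun x hx y hy h => hcinj x hx y hy (congrArg Prod.fst h))).symm
    rw [himg]
    apply key_lemma η hb1 (η - 1) (k - 2)
    · intro a ha
      obtain ⟨i, hi, rfl⟩ := Finset.mem_image.mp ha
      rw [hF, Finset.mem_filter] at hi
      simp only
      omega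
    · intro a ha
      obtain ⟨i, hi, rfl⟩ := Finset.mem_image.mp ha
      rw [hF, Finset.mem_filter] at hi
      have := hrik i
      simp only
      omega
    · intro x hx y hy hxy
      simp only [Finset.coe_image, Set.mem_image] at hx hy
      obtain ⟨i, hi, rfl⟩ := hx
      obtain ⟨j, hj, rfl⟩ := hy
      simp only at hxy
      rw [hcinj i hi j hj hxy]
    · intro x hx y hy hxy
      simp only [Finset.coe_image, Set.mem_image] at hx hy
      obtain ⟨i, hi, rfl⟩ := hx
      obtain ⟨j, hj, rfl⟩ := hy
      simp only at hxy
      rw [hrinj i hi j hj hxy]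
  omega

/-- Let `r ≥ 3` be odd, `k ≥ r`, `d = k + (r-1)/2`, `η = d-k+1`. For every
`ℓ ∈ {1,…,r}` and every `ℓ×ℓ` submatrix `M` of the `k×r` matrix `P`, the determinant of `M`
(computed in `𝔽₂[x]`) has degree at most `B = 2·Σ_{m=0}^{(r-3)/2} (d-k-m)·η^{k-2-m}`. -/
theorem stmt_14 (k r d η : ℕ)
    (hr3 : 3 ≤ r) (hrodd : Odd r) (hkr : r ≤ k)
    (hd : d = k + (r - 1) / 2) (hη : η = d - k + 1)
    (ℓ : ℕ) (hℓ1 : 1 ≤ ℓ) (hℓr : ℓ ≤ r)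
    (rows : Fin ℓ → Fin k) (cols : Fin ℓ → Fin r)
    (hrows : Function.Injective rows) (hcols : Function.Injective cols) :
    (((encodingMatrixP k r η).submatrix rows cols).det).natDegree ≤
      2 * ∑ m ∈ Finset.range ((r - 1) / 2), (d - k - m) * η ^ (k - 2 - m) := by
  obtain ⟨t, ht⟩ := hrodd
  have hdiv : (r - 1) / 2 = t := by omega
  have hdk : d - k = t := by omega
  have hηt : η = t + 1 := by omega
  have hη2 : 2 ≤ η := by omega
  have hrη : r = 2 * η - 1 := by omega
  have hRHSeq : 2 * ∑ m ∈ Finset.range ((r - 1) / 2), (d - k - m) * η ^ (k - 2 - m)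
      = 2 * ∑ m ∈ Finset.range (η - 1), (η - 1 - m) * η ^ (k - 2 - m) := by
    congr 1
    apply Finset.sum_congr (by rw [hdiv, hηt]; congr 1)
    intro m _
    congr 2
    omega
  rw [hRHSeq, Matrix.det_apply']
  apply Polynomial.natDegree_sum_le_of_forall_le
  intro σ _
  calc (((Equiv.Perm.sign σ : ℤ) : Polynomial (ZMod 2))
          * ∏ i, (encodingMatrixP k r η).submatrix rows cols (σ i) i).natDegree
      ≤ ((Equiv.Perm.sign σ : ℤ) : Polynomial (ZMod 2)).natDegree
        + (∏ i, (encodingMatrixP k r η).submatrix rows cols (σ i) i).natDegree :=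
        natDegree_mul_le
    _ ≤ (∏ i, (encodingMatrixP k r η).submatrix rows cols (σ i) i).natDegree := by
        rw [natDegree_intCast]; omega
    _ ≤ ∑ i, ((encodingMatrixP k r η).submatrix rows cols (σ i) i).natDegree :=
        natDegree_prod_le _ _
    _ = ∑ i : Fin ℓ, expE k η ((rows (σ i) : ℕ)) ((cols i : ℕ)) := by
        apply Finset.sum_congr rfl
        intro i _
        rw [Matrix.submatrix_apply, encodingMatrixP_eq, natDegree_X_pow]
    _ ≤ 2 * ∑ m ∈ Finset.range (η - 1), (η - 1 - m) * η ^ (k - 2 - m) := by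
        apply main_bound k η ℓ hη2 (by omega)
        · exact fun a b h => σ.injective (hrows (Fin.val_injective h))
        · exact fun a b h => hcols (Fin.val_injective h)
        · exact fun i => (rows (σ i)).isLt
        · exact fun i => by have := (cols i).isLt; omega
end

section
/- Let p ≥ 1 be an integer, let S be a finite set of natural numbers, and let f = Σ_{e ∈ S} x^e ∈ 𝔽₂[x]. If there exists s ∈ S such that no other element of S is congruent to s modulo p, then 1 + x^p does not divide f in 𝔽₂[x]. -/
open Polynomial

/-- Let `p ≥ 1`, `S` a finite set of natural numbers, and
`f = Σ_{e ∈ S} x^e ∈ 𝔽₂[x]`. If some `s ∈ S` is the only element of `S` in its residue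
class modulo `p`, then `1 + x^p` does not divide `f` in `𝔽₂[x]`. -/
theorem stmt_18 (p : ℕ) (hp : 1 ≤ p) (S : Finset ℕ)
    (hex : ∃ s ∈ S, ∀ t ∈ S, t ≠ s → ¬ (t ≡ s [MOD p])) :
    ¬ ((1 + X ^ p : Polynomial (ZMod 2)) ∣ ∑ e ∈ S, X ^ e) := by
  obtain ⟨s, hs, huniq⟩ := hex
  intro hdvd
  have heq : (1 + X ^ p : Polynomial (ZMod 2)) = X ^ p - 1 := by
    rw [sub_eq_add_neg, CharTwo.neg_eq, add_comm]
  rw [heq] at hdvd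
  set g : Polynomial (ZMod 2) := ∑ e ∈ S, X ^ (e % p) with hg
  -- X^p - 1 divides f - g
  have hdvd2 : (X ^ p - 1 : Polynomial (ZMod 2)) ∣ (∑ e ∈ S, X ^ e) - g := by
    rw [hg, ← Finset.sum_sub_distrib]
    apply Finset.dvd_sum
    intro e _
    have he : e = p * (e / p) + e % p := (Nat.div_add_mod e p).symm
    calc (X ^ p - 1 : Polynomial (ZMod 2)) ∣ ((X ^ p) ^ (e / p) - 1) :=
          (by simpa using sub_dvd_pow_sub_pow (X ^ p : Polynomial (ZMod 2)) 1 (e / p))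
      _ ∣ X ^ e - X ^ (e % p) := by
          refine ⟨X ^ (e % p), ?_⟩
          rw [sub_mul, one_mul, ← pow_mul, ← pow_add, ← he]
  have hdvdg : (X ^ p - 1 : Polynomial (ZMod 2)) ∣ g := by
    have := dvd_sub hdvd hdvd2
    simpa using this
  -- g has coefficient 1 at s % p
  have hcoeff : g.coeff (s % p) = 1 := by
    rw [hg, finset_sum_coeff]
    have : ∀ e ∈ S, (X ^ (e % p) : Polynomial (ZMod 2)).coeff (s % p)
        = if e = s then 1 else 0 := by
      intro e he
      rw [coeff_X_pow]
      by_cases h : e = s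
      · simp [h]
      · have : ¬ e % p = s % p := huniq e he h
        rw [if_neg (fun h' => this h'.symm), if_neg h]
    rw [Finset.sum_congr rfl this]
    simp [hs]
  have hgne : g ≠ 0 := by
    intro h
    rw [h] at hcoeff
    simp at hcoeff
  -- degree bounds
  have hdegg : g.degree < p := by
    rw [hg]
    apply lt_of_le_of_lt (Polynomial.degree_sum_le _ _)
    rw [Finset.sup_lt_iff (by exact_mod_cast WithBot.bot_lt_coe p)]
    intro e _
    apply lt_of_le_of_lt (Polynomial.degree_X_pow_le _)
    exact_mod_cast Nat.mod_lt e hp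
  have hdegd : (p : WithBot ℕ) ≤ g.degree := by
    have := Polynomial.degree_le_of_dvd hdvdg hgne
    rwa [show (X ^ p - 1 : Polynomial (ZMod 2)) = X ^ p - C 1 by simp,
      Polynomial.degree_X_pow_sub_C hp] at this
  exact absurd (lt_of_le_of_lt hdegd hdegg) (lt_irrefl _)
end
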